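/- arXiv:1311.0597 — 2 statements merged into one kernel-verified Lean document; each statement's English description precedes it below -/
import Mathlib

section
/- (Lemma 1.) There is an absolute constant C > 0 such that for every s ∈ ℂ with Re(s) ≥ 1 or |Im(s)| ≥ 1 one has |Γ'(s)/Γ(s) − log s| ≤ C, where Γ is the complex Gamma function and log is the principal branch of the logarithm. -/
open Complex MeasureTheory
open scoped Real Classical

noncomputable section

/-- Multiplicity of a zero of `riemannZeta`. -/
def zetaMult (ρ : ℂ) : ℕ :=
  if h : AnalyticAt ℂ riemannZeta ρ then (analyticOrderAt riemannZeta ρ).toNat else 0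

/-- Nontrivial zeros of the Riemann zeta function. -/
def NZ : Set ℂ := {ρ : ℂ | riemannZeta ρ = 0 ∧ 0 < ρ.re ∧ ρ.re < 1}

/-- Montgomery's weight. -/
def w (u : ℝ) : ℝ := 4 / (4 + u ^ 2)

/-- The generalized pair-correlation function. -/
def Fpair (X T τ : ℝ) : ℂ :=
  ∑' ρ : NZ, ∑' ρ' : NZ,
    if ρ.1.im ∈ Set.Icc (-T) T ∧ ρ'.1.im ∈ Set.Icc (-T) T then
      ((zetaMult ρ.1 * zetaMult ρ'.1 : ℕ) : ℂ) *
        (X : ℂ) ^ (Complex.I * ((ρ.1.im : ℂ) - (ρ'.1.im : ℂ))) *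
        ((w (τ * (ρ.1.im - ρ'.1.im)) : ℝ) : ℂ)
    else 0

/-- The function `Φ(X,t,τ)`. -/
def Phi (X t τ : ℝ) : ℝ :=
  ‖∑' ρ : NZ, ((zetaMult ρ.1 : ℕ) : ℂ) * (X : ℂ) ^ (Complex.I * (ρ.1.im : ℂ)) /
      ((1 + τ ^ 2 * (t - ρ.1.im) ^ 2 : ℝ) : ℂ)‖

/-- The weight `a(u,X,τ)`. -/
def afun (u X τ : ℝ) : ℝ := if u ≤ X then (u / X) ^ (1 / τ) else (X / u) ^ (1 / τ)

/-- `S(X,τ)`. -/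
def Sfun (X τ : ℝ) : ℝ :=
  ∑' n : ℕ, (ArithmeticFunction.vonMangoldt n) ^ 2 * (afun n X τ) ^ 2 / n

/-- Chebyshev ψ function. -/
def psi (x : ℝ) : ℝ := ∑ n ∈ Finset.Icc 1 ⌊x⌋₊, ArithmeticFunction.vonMangoldt n

/-- `J(X,τ,θ)`. -/
def J (X τ θ : ℝ) : ℝ := ∫ x in X..(X * (1 + τ)), (psi (x + θ * x) - psi x - θ * x) ^ 2

/-- `c(θ,s)`. -/
def cfun (θ : ℝ) (s : ℂ) : ℂ :=
  if s = 0 then ((Real.log (1 + θ) : ℝ) : ℂ) else (((1 + θ : ℝ) : ℂ) ^ s - 1) / s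

/-- The Conjecture on `F(X,T,τ)`. -/
def Conjecture : Prop :=
  ∀ ε > (0 : ℝ), ∀ M > (1 : ℝ), ∀ δ > (0 : ℝ), ∃ H₀ : ℝ,
    ∀ X T τ : ℝ, H₀ ≤ min X T → max X T ≤ (min X T) ^ M →
      (min X T) ^ (-1 + ε) ≤ τ → τ ≤ 1 →
      ‖Fpair X T τ - (((T / π) * Real.log (min X T) : ℝ) : ℂ)‖ ≤
        δ * ((T / π) * Real.log (min X T))

/-- Hypothesis `K(β)`. -/
def HypK (β : ℝ) : Prop :=
  ∀ ε > (0 : ℝ), ∀ δ > (0 : ℝ), ∃ X₀ : ℝ, ∀ X ≥ X₀, ∀ h : ℝ,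
    X ^ (β + ε) ≤ h → h ≤ X → |psi (X + h) - psi X - h| ≤ δ * h

/-!
Euler's limit `GammaSeq s n → Γ(s)` is locally uniform on `0 < re s`: on a strip `a ≤ re s ≤ b`
the error is bounded by a dominated-convergence integral that does not depend on `s`. Hence the
logarithmic derivatives converge, `ψ(s) = lim (log n - ∑_{j ≤ n} (s + j)⁻¹)`, and the recursion
`ψ(s + 1) = ψ(s) + s⁻¹` extends this to every `s ∉ -ℕ`. Telescoping `log (s + n + 1) - log s`
writes `ψ(s) - log s` as the limit of `∑_{j ≤ n} (log (s + j + 1) - log (s + j) - (s + j)⁻¹)`.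
Outside `D` the `j`-th term is at most `4 / ((re s + j) ^ 2 + 1)`, and these weights sum to at
most `3π` because each is dominated by `3 (arctan (re s + j + 1) - arctan (re s + j))`.
-/

open Filter Set Topology

/-- The integrand of `Complex.GammaSeq_eq_approx_Gamma_integral`, extended by `0` to `x > n`. -/
def gammaApprox (n : ℕ) (x : ℝ) : ℝ := max (1 - x / n) 0 ^ n

lemma gammaApprox_of_le {n : ℕ} {x : ℝ} (h : x ≤ n) : gammaApprox n x = (1 - x / n) ^ n := by
  rw [gammaApprox, max_eq_left (sub_nonneg.mpr (div_le_one_of_le₀ h n.cast_nonneg))]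

lemma gammaApprox_of_lt {n : ℕ} (hn : n ≠ 0) {x : ℝ} (h : n < x) : gammaApprox n x = 0 := by
  have : 1 ≤ x / n := (one_le_div (by positivity)).mpr h.le
  rw [gammaApprox, max_eq_right (by linarith), zero_pow hn]

lemma gammaApprox_nonneg (n : ℕ) (x : ℝ) : 0 ≤ gammaApprox n x := by
  unfold gammaApprox; positivity

lemma gammaApprox_le_exp {n : ℕ} (hn : n ≠ 0) (x : ℝ) : gammaApprox n x ≤ Real.exp (-x) := by
  rcases le_or_gt x n with h | h
  · rw [gammaApprox_of_le h]; exact Real.one_sub_div_pow_le_exp_neg h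
  · rw [gammaApprox_of_lt hn h]; positivity

lemma tendsto_gammaApprox (x : ℝ) :
    Tendsto (gammaApprox · x) atTop (𝓝 (Real.exp (-x))) := by
  refine (Real.tendsto_one_add_div_pow_exp (-x)).congr' ?_
  filter_upwards [eventually_ge_atTop ⌈x⌉₊] with n hn
  rw [gammaApprox_of_le (Nat.ceil_le.mp hn), neg_div, ← sub_eq_add_neg]

lemma GammaSeq_eq_integral_gammaApprox {s : ℂ} (hs : 0 < s.re) {n : ℕ} (hn : n ≠ 0) :
    GammaSeq s n = ∫ x in Ioi (0 : ℝ), (gammaApprox n x : ℂ) * (x : ℂ) ^ (s - 1) := by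
  rw [GammaSeq_eq_approx_Gamma_integral hs hn, intervalIntegral.integral_of_le n.cast_nonneg,
    setIntegral_eq_of_subset_of_forall_sdiff_eq_zero measurableSet_Ioi Ioc_subset_Ioi_self]
  · exact setIntegral_congr_fun measurableSet_Ioc fun x hx => by rw [gammaApprox_of_le hx.2]
  · rintro x ⟨hx0, hxn⟩
    rw [gammaApprox_of_lt hn (by simpa [mem_Ioi.mp hx0] using hxn), ofReal_zero, zero_mul]

lemma integrableOn_gammaApprox_mul_cpow {s : ℂ} (hs : 0 < s.re) {n : ℕ} (hn : n ≠ 0) :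
    IntegrableOn (fun x : ℝ => (gammaApprox n x : ℂ) * (x : ℂ) ^ (s - 1)) (Ioi 0) := by
  refine Integrable.mono (GammaIntegral_convergent hs) (by unfold gammaApprox; fun_prop) ?_
  refine ae_of_all _ fun x => ?_
  rw [norm_mul, norm_mul, norm_real, norm_real]
  gcongr
  rw [Real.norm_of_nonneg (gammaApprox_nonneg n x)]
  exact (gammaApprox_le_exp hn x).trans (Real.le_norm_self _)

lemma norm_exp_sub_gammaApprox_mul_le {n : ℕ} (hn : n ≠ 0) {x w : ℝ} (hw : 0 ≤ w) :
    ‖(Real.exp (-x) - gammaApprox n x) * w‖ ≤ Real.exp (-x) * w := by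
  rw [norm_mul, Real.norm_of_nonneg (sub_nonneg.mpr (gammaApprox_le_exp hn x)),
    Real.norm_of_nonneg hw]
  gcongr
  linarith [gammaApprox_nonneg n x]

lemma integrableOn_exp_mul_rpow_add_rpow {a b : ℝ} (ha : 0 < a) (hb : 0 < b) :
    IntegrableOn (fun x : ℝ => Real.exp (-x) * (x ^ (a - 1) + x ^ (b - 1))) (Ioi 0) := by
  refine ((Real.GammaIntegral_convergent ha).add (Real.GammaIntegral_convergent hb)).congr_fun
    (fun x _ => ?_) measurableSet_Ioi
  simp only [Pi.add_apply, mul_add]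

lemma integrableOn_exp_sub_gammaApprox_mul {a b : ℝ} (ha : 0 < a) (hb : 0 < b) {n : ℕ}
    (hn : n ≠ 0) :
    IntegrableOn (fun x : ℝ => (Real.exp (-x) - gammaApprox n x) * (x ^ (a - 1) + x ^ (b - 1)))
      (Ioi 0) := by
  refine Integrable.mono (integrableOn_exp_mul_rpow_add_rpow ha hb)
    (by unfold gammaApprox; fun_prop) ((ae_restrict_iff' measurableSet_Ioi).mpr ?_)
  refine ae_of_all _ fun x (hx : 0 < x) => ?_
  exact (norm_exp_sub_gammaApprox_mul_le hn (by positivity)).trans (Real.le_norm_self _)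

lemma tendsto_integral_exp_sub_gammaApprox_mul {a b : ℝ} (ha : 0 < a) (hb : 0 < b) :
    Tendsto (fun n : ℕ => ∫ x in Ioi (0 : ℝ),
      (Real.exp (-x) - gammaApprox n x) * (x ^ (a - 1) + x ^ (b - 1))) atTop (𝓝 0) := by
  have hbound : ∀ᶠ n : ℕ in atTop, ∀ᵐ x ∂volume.restrict (Ioi (0 : ℝ)),
      ‖(Real.exp (-x) - gammaApprox n x) * (x ^ (a - 1) + x ^ (b - 1))‖ ≤
        Real.exp (-x) * (x ^ (a - 1) + x ^ (b - 1)) := by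
    filter_upwards [eventually_ne_atTop 0] with n hn
    exact (ae_restrict_iff' measurableSet_Ioi).mpr
      (ae_of_all _ fun x (hx : 0 < x) => norm_exp_sub_gammaApprox_mul_le hn (by positivity))
  have hlim : ∀ x : ℝ, Tendsto (fun n : ℕ =>
      (Real.exp (-x) - gammaApprox n x) * (x ^ (a - 1) + x ^ (b - 1))) atTop (𝓝 0) := fun x => by
    simpa using ((tendsto_gammaApprox x).const_sub (Real.exp (-x))).mul_const
      (x ^ (a - 1) + x ^ (b - 1))
  simpa using tendsto_integral_filter_of_dominated_convergence _
    (Eventually.of_forall fun n => by unfold gammaApprox; fun_prop) hbound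
    (integrableOn_exp_mul_rpow_add_rpow ha hb) (ae_of_all _ hlim)

lemma rpow_sub_one_le_rpow_add_rpow {a b c x : ℝ} (hx : 0 < x) (hac : a ≤ c) (hcb : c ≤ b) :
    x ^ (c - 1) ≤ x ^ (a - 1) + x ^ (b - 1) := by
  rcases le_or_gt 1 x with h | h
  · linarith [Real.rpow_le_rpow_of_exponent_le h (by linarith : c - 1 ≤ b - 1),
      Real.rpow_nonneg hx.le (a - 1)]
  · linarith [Real.rpow_le_rpow_of_exponent_ge hx h.le (by linarith : a - 1 ≤ c - 1),
      Real.rpow_nonneg hx.le (b - 1)]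

lemma norm_Gamma_sub_GammaSeq_le {a b : ℝ} {s : ℂ} (ha : 0 < a) (hsa : a ≤ s.re)
    (hsb : s.re ≤ b) {n : ℕ} (hn : n ≠ 0) :
    ‖Gamma s - GammaSeq s n‖ ≤ ∫ x in Ioi (0 : ℝ),
      (Real.exp (-x) - gammaApprox n x) * (x ^ (a - 1) + x ^ (b - 1)) := by
  have hs : 0 < s.re := ha.trans_le hsa
  rw [Gamma_eq_integral hs, GammaSeq_eq_integral_gammaApprox hs hn, GammaIntegral,
    ← integral_sub (GammaIntegral_convergent hs) (integrableOn_gammaApprox_mul_cpow hs hn)]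
  refine norm_integral_le_of_norm_le (integrableOn_exp_sub_gammaApprox_mul ha (by linarith) hn)
    ((ae_restrict_iff' measurableSet_Ioi).mpr (ae_of_all _ fun x (hx : 0 < x) => ?_))
  rw [← sub_mul, ← ofReal_sub, norm_mul, norm_real, norm_cpow_eq_rpow_re_of_pos hx, sub_re,
    one_re, Real.norm_of_nonneg (sub_nonneg.mpr (gammaApprox_le_exp hn x))]
  exact mul_le_mul_of_nonneg_left (rpow_sub_one_le_rpow_add_rpow hx hsa hsb)
    (sub_nonneg.mpr (gammaApprox_le_exp hn x))

lemma tendstoUniformlyOn_GammaSeq {a b : ℝ} (ha : 0 < a) (hab : a ≤ b) :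
    TendstoUniformlyOn (fun n s => GammaSeq s n) Gamma atTop (re ⁻¹' Icc a b) := by
  rw [Metric.tendstoUniformlyOn_iff]
  intro ε hε
  have hint := tendsto_integral_exp_sub_gammaApprox_mul ha (ha.trans_le hab)
  filter_upwards [hint.eventually_lt_const hε, eventually_ne_atTop 0] with n hεn hn s hs
  rw [dist_eq_norm]
  exact (norm_Gamma_sub_GammaSeq_le ha hs.1 hs.2 hn).trans_lt hεn

lemma tendstoLocallyUniformlyOn_GammaSeq :
    TendstoLocallyUniformlyOn (fun n s => GammaSeq s n) Gamma atTop {s | 0 < s.re} := by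
  refine tendstoLocallyUniformlyOn_of_forall_exists_nhds fun z (hz : 0 < z.re) => ?_
  refine ⟨re ⁻¹' Icc (z.re / 2) (z.re + 1), mem_nhdsWithin_of_mem_nhds ?_,
    tendstoUniformlyOn_GammaSeq (by positivity) (by linarith)⟩
  exact continuous_re.continuousAt.preimage_mem_nhds (Icc_mem_nhds (by linarith) (by linarith))

def digammaSeq (s : ℂ) (n : ℕ) : ℂ := log n - ∑ j ∈ Finset.range (n + 1), (s + j)⁻¹

lemma differentiableAt_GammaSeq {s : ℂ} (hs : ∀ j : ℕ, s + j ≠ 0) {n : ℕ} (hn : n ≠ 0) :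
    DifferentiableAt ℂ (GammaSeq · n) s := by
  unfold GammaSeq
  refine DifferentiableAt.div ?_ ?_ (Finset.prod_ne_zero_iff.mpr fun j _ => hs j)
  · exact (differentiableAt_id.const_cpow (Or.inl (Nat.cast_ne_zero.mpr hn))).mul_const _
  · exact DifferentiableAt.fun_finsetProd fun j _ => differentiableAt_id.add_const _

lemma logDeriv_GammaSeq {s : ℂ} (hs : ∀ j : ℕ, s + j ≠ 0) {n : ℕ} (hn : n ≠ 0) :
    logDeriv (GammaSeq · n) s = digammaSeq s n := by
  have hn' : (n : ℂ) ≠ 0 := Nat.cast_ne_zero.mpr hn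
  have hfac : (n.factorial : ℂ) ≠ 0 := Nat.cast_ne_zero.mpr n.factorial_ne_zero
  have hpow : (n : ℂ) ^ s ≠ 0 := by simp [cpow_eq_zero_iff, hn']
  have hlin : ∀ j : ℕ, DifferentiableAt ℂ (fun z : ℂ => z + j) s :=
    fun j => differentiableAt_id.add_const _
  unfold GammaSeq
  rw [logDeriv_div (f := fun z => (n : ℂ) ^ z * n.factorial)
      (g := fun z => ∏ j ∈ Finset.range (n + 1), (z + j)) s (mul_ne_zero hpow hfac)
      (Finset.prod_ne_zero_iff.mpr fun j _ => hs j)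
      ((differentiableAt_id.const_cpow (Or.inl hn')).mul_const _)
      (DifferentiableAt.fun_finsetProd fun j _ => hlin j),
    logDeriv_mul_const s _ hfac, logDeriv_prod (fun j _ => hs j) (fun j _ => hlin j),
    logDeriv_apply, (hasStrictDerivAt_const_cpow (Or.inl hn')).hasDerivAt.deriv,
    mul_div_cancel_left₀ _ hpow, digammaSeq]
  congr 1
  refine Finset.sum_congr rfl fun j _ => ?_
  rw [logDeriv_apply, deriv_add_const, deriv_id'', one_div]

lemma tendsto_digammaSeq_of_re_pos {s : ℂ} (hs : 0 < s.re) :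
    Tendsto (digammaSeq s) atTop (𝓝 (digamma s)) := by
  have hzj : ∀ z : ℂ, 0 < z.re → ∀ j : ℕ, z + j ≠ 0 := fun z hz j h => by
    have := congrArg re h
    simp only [add_re, natCast_re, zero_re] at this
    linarith [j.cast_nonneg (α := ℝ)]
  have hdiff : ∀ᶠ n : ℕ in atTop, DifferentiableOn ℂ (GammaSeq · n) {z | 0 < z.re} := by
    filter_upwards [eventually_ne_atTop 0] with n hn
    exact fun z hz => (differentiableAt_GammaSeq (hzj z hz) hn).differentiableWithinAt
  have hGamma : Gamma s ≠ 0 := Gamma_ne_zero_of_re_pos hs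
  refine (logDeriv_tendsto (isOpen_lt continuous_const continuous_re) hs
    tendstoLocallyUniformlyOn_GammaSeq hdiff hGamma).congr' ?_
  filter_upwards [eventually_ne_atTop 0] with n hn
  exact logDeriv_GammaSeq (hzj s hs) hn

lemma digammaSeq_eq_digammaSeq_add_one (s : ℂ) (n : ℕ) :
    digammaSeq s n = digammaSeq (s + 1) n + (s + 1 + n)⁻¹ - s⁻¹ := by
  simp only [digammaSeq, Finset.sum_range_succ' (fun j : ℕ => (s + j)⁻¹),
    Finset.sum_range_succ (fun j : ℕ => (s + 1 + j)⁻¹)]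
  push_cast
  simp only [add_assoc, add_comm (1 : ℂ), add_zero]
  ring

lemma tendsto_inv_add_natCast (c : ℂ) : Tendsto (fun n : ℕ => (c + n)⁻¹) atTop (𝓝 0) :=
  tendsto_inv₀_cobounded.comp
    ((tendsto_const_add_cobounded c).comp tendsto_natCast_atTop_cobounded)

lemma tendsto_digammaSeq {s : ℂ} (hs : ∀ m : ℕ, s ≠ -m) :
    Tendsto (digammaSeq s) atTop (𝓝 (digamma s)) := by
  obtain ⟨m, hm⟩ := exists_nat_gt (-s.re)
  induction m generalizing s with
  | zero => exact tendsto_digammaSeq_of_re_pos (by simpa using hm)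
  | succ m ih =>
    rcases lt_or_ge 0 s.re with hpos | hnonpos
    · exact tendsto_digammaSeq_of_re_pos hpos
    have hs1 : ∀ k : ℕ, s + 1 ≠ -k := fun k h => hs (k + 1) (by push_cast; linear_combination h)
    have hlim := (ih hs1 (by simp; push_cast at hm; linarith)).add
      ((tendsto_inv_add_natCast (s + 1)).sub_const s⁻¹)
    rw [digamma_apply_add_one s hs, zero_sub, ← sub_eq_add_neg, add_sub_cancel_right] at hlim
    exact hlim.congr fun n => by rw [digammaSeq_eq_digammaSeq_add_one s n, add_sub_assoc]

lemma tendsto_log_add_natCast_sub_log (c : ℂ) :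
    Tendsto (fun n : ℕ => log (c + n) - log n) atTop (𝓝 0) := by
  have hratio : Tendsto (fun n : ℕ => 1 + c * (n : ℂ)⁻¹) atTop (𝓝 1) := by
    simpa using ((tendsto_inv_add_natCast 0).const_mul c).const_add 1
  have hlog := (continuousAt_clog one_mem_slitPlane).tendsto.comp hratio
  rw [log_one] at hlog
  refine hlog.congr' ?_
  filter_upwards [eventually_ne_atTop 0, hratio.eventually_ne one_ne_zero] with n hn hne
  have hn' : (0 : ℝ) < n := by positivity
  have : c + n = ((n : ℝ) : ℂ) * (1 + c * (n : ℂ)⁻¹) := by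
    field_simp [Nat.cast_ne_zero.mpr hn]; push_cast; ring
  rw [Function.comp_apply, this, log_ofReal_mul hn' hne, natCast_log]
  ring

lemma digammaSeq_sub_log (s : ℂ) (n : ℕ) :
    digammaSeq s n - log s = (log n - log (s + 1 + n)) +
      ∑ j ∈ Finset.range (n + 1), (log (s + j + 1) - log (s + j) - (s + j)⁻¹) := by
  have htel := Finset.sum_range_sub (fun j : ℕ => log (s + j)) (n + 1)
  push_cast at htel
  rw [Finset.sum_sub_distrib, digammaSeq]
  simp only [add_assoc] at htel ⊢
  rw [htel, add_zero, add_comm (1 : ℂ) n]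
  ring

lemma sq_add_one_le_three_mul {u v : ℝ} (h : |u - v| ≤ 1) : u ^ 2 + 1 ≤ 3 * (v ^ 2 + 1) := by
  have : (u - v) ^ 2 ≤ 1 := by rw [← sq_abs]; nlinarith [abs_nonneg (u - v)]
  nlinarith [sq_nonneg (u - 2 * v)]

lemma inv_sq_add_one_le_arctan_sub (u : ℝ) :
    (u ^ 2 + 1)⁻¹ ≤ 3 * (Real.arctan (u + 1) - Real.arctan u) := by
  obtain ⟨c, hc, hslope⟩ := exists_deriv_eq_slope Real.arctan (lt_add_one u)
    Real.continuous_arctan.continuousOn Real.differentiable_arctan.differentiableOn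
  rw [Real.deriv_arctan, add_sub_cancel_left, div_one] at hslope
  rw [← hslope]
  have := sq_add_one_le_three_mul (u := c) (v := u)
    (abs_le.mpr ⟨by linarith [hc.1], by linarith [hc.2]⟩)
  rw [mul_one_div, le_div_iff₀ (by positivity), inv_mul_le_iff₀ (by positivity)]
  linarith

lemma sum_inv_sq_add_one_le (x : ℝ) (N : ℕ) :
    ∑ j ∈ Finset.range N, ((x + j) ^ 2 + 1)⁻¹ ≤ 3 * π := by
  calc ∑ j ∈ Finset.range N, ((x + j) ^ 2 + 1)⁻¹
      ≤ ∑ j ∈ Finset.range N, 3 * (Real.arctan (x + (j + 1 : ℕ)) - Real.arctan (x + j)) :=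
        Finset.sum_le_sum fun j _ => by
          push_cast; rw [← add_assoc]; exact inv_sq_add_one_le_arctan_sub _
    _ = 3 * (Real.arctan (x + N) - Real.arctan x) := by
        rw [← Finset.mul_sum, Finset.sum_range_sub (fun j : ℕ => Real.arctan (x + j))]
        simp
    _ ≤ 3 * π := by
        linarith [Real.arctan_lt_pi_div_two (x + N), Real.neg_pi_div_two_lt_arctan x]

/-- The complement of the half-strip `D = {s | re s < 1 ∧ |im s| < 1}`. -/
def halfStripCompl : Set ℂ := {s | 1 ≤ s.re ∨ 1 ≤ |s.im|}

lemma re_sq_add_one_le_two_mul_norm_sq {z : ℂ} (hz : z ∈ halfStripCompl) :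
    z.re ^ 2 + 1 ≤ 2 * ‖z‖ ^ 2 := by
  rw [Complex.sq_norm, normSq_apply]
  rcases hz with h | h
  · nlinarith [mul_self_nonneg z.im]
  · nlinarith [mul_self_nonneg z.re, one_le_sq_iff_one_le_abs _ |>.mpr h]

lemma add_ofReal_mem_halfStripCompl {z : ℂ} (hz : z ∈ halfStripCompl) {τ : ℝ} (hτ : 0 ≤ τ) :
    z + τ ∈ halfStripCompl := by
  simp only [halfStripCompl, mem_ofPred_eq, add_re, ofReal_re, add_im, ofReal_im, add_zero]
  exact hz.imp_left fun h => by linarith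

lemma mem_slitPlane_of_mem_halfStripCompl {z : ℂ} (hz : z ∈ halfStripCompl) : z ∈ slitPlane := by
  rw [mem_slitPlane_iff]
  refine hz.imp (fun h => by linarith) fun h h0 => ?_
  rw [h0, abs_zero] at h
  linarith

lemma ne_neg_natCast_of_mem_halfStripCompl {s : ℂ} (hs : s ∈ halfStripCompl) (m : ℕ) :
    s ≠ -m := fun h =>
  slitPlane_ne_zero
    (mem_slitPlane_of_mem_halfStripCompl (add_ofReal_mem_halfStripCompl hs m.cast_nonneg))
    (by rw [h, ofReal_natCast, neg_add_cancel])

lemma norm_inv_add_ofReal_sub_inv_le {z : ℂ} (hz : z ∈ halfStripCompl) {τ : ℝ}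
    (hτ0 : 0 ≤ τ) (hτ1 : τ ≤ 1) : ‖(z + τ)⁻¹ - z⁻¹‖ ≤ 4 / (z.re ^ 2 + 1) := by
  have hzτ := add_ofReal_mem_halfStripCompl hz hτ0
  have hprod : (z.re ^ 2 + 1) / 4 ≤ ‖z + τ‖ * ‖z‖ := by
    have h1 := re_sq_add_one_le_two_mul_norm_sq hz
    have h2 := re_sq_add_one_le_two_mul_norm_sq hzτ
    have h3 := sq_add_one_le_three_mul (u := z.re) (v := (z + τ).re)
      (by simp [abs_of_nonneg hτ0, hτ1])
    rw [← pow_le_pow_iff_left₀ (by positivity) (by positivity) two_ne_zero]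
    nlinarith [mul_le_mul h1 h2 (by positivity) (by positivity)]
  rw [inv_sub_inv (slitPlane_ne_zero (mem_slitPlane_of_mem_halfStripCompl hzτ))
    (slitPlane_ne_zero (mem_slitPlane_of_mem_halfStripCompl hz)), sub_add_cancel_left, norm_div,
    norm_neg, norm_mul, norm_real, Real.norm_of_nonneg hτ0]
  calc τ / (‖z + τ‖ * ‖z‖) ≤ 1 / ((z.re ^ 2 + 1) / 4) :=
        div_le_div₀ zero_le_one hτ1 (by positivity) hprod
    _ = 4 / (z.re ^ 2 + 1) := one_div_div _ _

lemma norm_log_add_one_sub_log_sub_inv_le {z : ℂ} (hz : z ∈ halfStripCompl) :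
    ‖log (z + 1) - log z - z⁻¹‖ ≤ 4 / (z.re ^ 2 + 1) := by
  have hderiv : ∀ τ ∈ Icc (0 : ℝ) 1, HasDerivWithinAt (fun τ : ℝ => log (z + τ) - τ * z⁻¹)
      ((z + τ)⁻¹ - z⁻¹) (Icc 0 1) τ := fun τ hτ => by
    have hlog := ((hasDerivAt_id (τ : ℂ)).const_add z).clog
      (mem_slitPlane_of_mem_halfStripCompl (add_ofReal_mem_halfStripCompl hz hτ.1))
    have hlin := (hasDerivAt_id (τ : ℂ)).mul_const z⁻¹
    simpa using ((hlog.sub hlin).comp_ofReal).hasDerivWithinAt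
  have := norm_image_sub_le_of_norm_deriv_le_segment' hderiv
    (fun τ hτ => norm_inv_add_ofReal_sub_inv_le hz hτ.1 hτ.2.le) 1 (right_mem_Icc.mpr zero_le_one)
  simpa [sub_right_comm] using this

lemma norm_sum_log_sub_le {s : ℂ} (hs : s ∈ halfStripCompl) (N : ℕ) :
    ‖∑ j ∈ Finset.range N, (log (s + j + 1) - log (s + j) - (s + j)⁻¹)‖ ≤ 12 * π := by
  calc ‖∑ j ∈ Finset.range N, (log (s + j + 1) - log (s + j) - (s + j)⁻¹)‖
      ≤ ∑ j ∈ Finset.range N, 4 * ((s.re + j) ^ 2 + 1)⁻¹ := by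
        refine (norm_sum_le _ _).trans (Finset.sum_le_sum fun j _ => ?_)
        have hsj := add_ofReal_mem_halfStripCompl hs j.cast_nonneg
        rw [ofReal_natCast] at hsj
        simpa [div_eq_mul_inv] using norm_log_add_one_sub_log_sub_inv_le hsj
    _ ≤ 4 * (3 * π) := by
        rw [← Finset.mul_sum]
        exact mul_le_mul_of_nonneg_left (sum_inv_sq_add_one_le s.re N) (by norm_num)
    _ = 12 * π := by ring

/-- Lemma 1: `Γ'/Γ(s) = log s + O(1)` outside
`D = {Re s < 1, |Im s| < 1}`. -/
theorem gamma_log_deriv_bound :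
    ∃ C : ℝ, 0 < C ∧ ∀ s : ℂ, (1 ≤ s.re ∨ 1 ≤ |s.im|) →
      ‖deriv Complex.Gamma s / Complex.Gamma s - Complex.log s‖ ≤ C := by
  refine ⟨12 * π, by positivity, fun s hs => ?_⟩
  have hlim := ((tendsto_digammaSeq (ne_neg_natCast_of_mem_halfStripCompl hs)).sub_const
    (log s)).add (tendsto_log_add_natCast_sub_log (s + 1))
  rw [add_zero] at hlim
  rw [← logDeriv_apply, ← digamma_def]
  refine le_of_tendsto' hlim.norm fun n =>
    (congrArg norm ?_).trans_le (norm_sum_log_sub_le hs (n + 1))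
  rw [digammaSeq_sub_log]
  ring

end
end

section
/- (Lemma 2.) For every κ ≥ 0 there exists a constant C = C(κ) > 0 such that for all real numbers a, b with 1 ≤ a ≤ b and every τ ∈ (0,1] the sum Σ_{a ≤ n ≤ b} (log n)^κ/(1+τ²n²) over integers n is bounded by: C·(b−a+1)·(log b)^κ if b ≤ 1/τ; C·τ^{−1}·(log(2/τ))^κ if a ≤ 1/τ ≤ b; and C·(τ²a)^{−1}·(log(2a))^κ if 1/τ ≤ a. -/
open Complex MeasureTheory
open scoped Real Classical

noncomputable section

/-!
Below `1 / τ` the denominator is at least `1`, so each term is at most `(log X) ^ κ` for the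
largest admissible `n ≤ X`, and it remains to count terms. Above `N := max a (1 / τ)` the
denominator exceeds `τ² n²`, and the tail `∑_{n ≥ N} (log n) ^ κ / n²` is `O((log 2N) ^ κ / N)`:
since `log n · log 2 ≤ log 2N · log (2n / N)` and `(log y) ^ κ ≪ √y`, one has
`(log n) ^ κ ≪ (log 2N) ^ κ · √(n / N)`, and `∑_{n ≥ N} n ^ (-3/2) ≤ 4 / √N` by telescoping
against `4 / √n`.
-/

open Finset

lemma log_rpow_le_mul_sqrt {κ x : ℝ} (hκ : 0 ≤ κ) (hx : 1 ≤ x) :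
    Real.log x ^ κ ≤ (2 * κ + 2) ^ κ * √x := by
  have hlog : Real.log x ≤ (2 * κ + 2) * x ^ (1 / (2 * κ + 2)) := by
    simpa [div_div_eq_mul_div, mul_comm] using
      Real.log_le_rpow_div (x := x) (by linarith) (ε := 1 / (2 * κ + 2)) (by positivity)
  calc Real.log x ^ κ ≤ ((2 * κ + 2) * x ^ (1 / (2 * κ + 2))) ^ κ := by
        gcongr; exact Real.log_nonneg hx
    _ = (2 * κ + 2) ^ κ * x ^ (κ / (2 * κ + 2)) := by
        rw [Real.mul_rpow (by positivity) (by positivity), ← Real.rpow_mul (by linarith)]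
        ring_nf
    _ ≤ (2 * κ + 2) ^ κ * x ^ (1 / 2 : ℝ) := by
        have hexp : κ / (2 * κ + 2) ≤ 1 / 2 := by rw [div_le_iff₀ (by positivity)]; linarith
        gcongr
    _ = (2 * κ + 2) ^ κ * √x := by rw [Real.sqrt_eq_rpow]

lemma log_mul_log_two_le_log_two_mul {N x : ℝ} (hN : 1 ≤ N) (hNx : N ≤ x) :
    Real.log x * Real.log 2 ≤ Real.log (2 * N) * Real.log (2 * (x / N)) := by
  have hN0 : 0 < N := by linarith
  have hu : 0 ≤ Real.log N := Real.log_nonneg hN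
  have hv : 0 ≤ Real.log (x / N) := Real.log_nonneg ((one_le_div hN0).mpr hNx)
  have hl : 0 < Real.log 2 := Real.log_pos one_lt_two
  have hx : Real.log x = Real.log N + Real.log (x / N) := by
    rw [Real.log_div (by linarith) hN0.ne']; ring
  rw [Real.log_mul two_ne_zero hN0.ne', Real.log_mul two_ne_zero (div_pos (by linarith) hN0).ne',
    hx]
  nlinarith [mul_nonneg hu hv]

lemma inv_mul_sqrt_le {x : ℝ} (hx : 1 ≤ x) :
    (x * √x)⁻¹ ≤ 4 * ((√x)⁻¹ - (√(x + 1))⁻¹) := by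
  have hs : 0 < √x := Real.sqrt_pos.mpr (by linarith)
  have hst : √x ≤ √(x + 1) := Real.sqrt_le_sqrt (by linarith)
  have hs2 : √x ^ 2 = x := Real.sq_sqrt (by linarith)
  have ht2 : √(x + 1) ^ 2 = x + 1 := Real.sq_sqrt (by linarith)
  calc (x * √x)⁻¹ ≤ 4 / ((√(x + 1) + √x) * √x * √(x + 1)) := by
        rw [inv_eq_one_div, div_le_div_iff₀ (by positivity) (by positivity)]
        nlinarith [mul_le_mul_of_nonneg_right hst hs.le]
    _ = 4 * ((√x)⁻¹ - (√(x + 1))⁻¹) := by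
        field_simp
        nlinarith

lemma Finset.sum_le_of_le_sub_succ {f G : ℕ → ℝ} {m : ℕ} {s : Finset ℕ}
    (hf : ∀ n, m ≤ n → 0 ≤ f n) (hfG : ∀ n, m ≤ n → f n ≤ G n - G (n + 1))
    (hG : ∀ n, 0 ≤ G n) (hs : ∀ n ∈ s, m ≤ n) :
    ∑ n ∈ s, f n ≤ G m := by
  set M := max m (s.sup id + 1)
  have hsub : s ⊆ Ico m M := fun n hn =>
    mem_Ico.mpr ⟨hs n hn, lt_max_of_lt_right (Nat.lt_succ_of_le (le_sup (f := id) hn))⟩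
  calc ∑ n ∈ s, f n ≤ ∑ n ∈ Ico m M, f n :=
        sum_le_sum_of_subset_of_nonneg hsub fun n hn _ => hf n (mem_Ico.mp hn).1
    _ ≤ ∑ n ∈ Ico m M, (G n - G (n + 1)) :=
        sum_le_sum fun n hn => hfG n (mem_Ico.mp hn).1
    _ = G m - G M := by
        simpa [neg_add_eq_sub] using sum_Ico_sub (fun n => -G n) (le_max_left m _)
    _ ≤ G m := by linarith [hG M]

lemma sum_inv_mul_sqrt_le {N : ℝ} {s : Finset ℕ} (hN : 1 ≤ N) (hs : ∀ n ∈ s, N ≤ n) :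
    ∑ n ∈ s, ((n : ℝ) * √n)⁻¹ ≤ 4 / √N := by
  have hm : 1 ≤ ⌈N⌉₊ := Nat.one_le_ceil_iff.mpr (by linarith)
  calc ∑ n ∈ s, ((n : ℝ) * √n)⁻¹ ≤ 4 * (√(⌈N⌉₊ : ℝ))⁻¹ := by
        refine sum_le_of_le_sub_succ (f := fun n => ((n : ℝ) * √n)⁻¹)
          (G := fun n => 4 * (√(n : ℝ))⁻¹) (fun n _ => by positivity) (fun n hn => ?_)
          (fun n => by positivity) (fun n hn => Nat.ceil_le.mpr (hs n hn))
        push_cast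
        rw [← mul_sub]
        exact inv_mul_sqrt_le (Nat.one_le_cast.mpr (hm.trans hn))
    _ ≤ 4 / √N := by
        rw [div_eq_mul_inv]
        gcongr
        exact Nat.le_ceil N

lemma log_rpow_le_of_le {κ N x : ℝ} (hκ : 0 ≤ κ) (hN : 1 ≤ N) (hNx : N ≤ x) :
    Real.log x ^ κ ≤
      (2 * κ + 2) ^ κ * √2 / Real.log 2 ^ κ * Real.log (2 * N) ^ κ * (√x / √N) := by
  have hN0 : 0 < N := by linarith
  have hl : 0 < Real.log 2 ^ κ := Real.rpow_pos_of_pos (Real.log_pos one_lt_two) κ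
  have hxN : 1 ≤ x / N := (one_le_div hN0).mpr hNx
  have hprod : (Real.log x * Real.log 2) ^ κ ≤
      (Real.log (2 * N) * Real.log (2 * (x / N))) ^ κ :=
    Real.rpow_le_rpow (mul_nonneg (Real.log_nonneg (hN.trans hNx)) (Real.log_pos one_lt_two).le)
      (log_mul_log_two_le_log_two_mul hN hNx) hκ
  have hgrowth := log_rpow_le_mul_sqrt hκ (show 1 ≤ 2 * (x / N) by linarith)
  rw [Real.mul_rpow (Real.log_nonneg (hN.trans hNx)) (Real.log_pos one_lt_two).le,
    Real.mul_rpow (Real.log_nonneg (by linarith)) (Real.log_nonneg (by linarith))] at hprod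
  rw [Real.sqrt_mul zero_le_two, Real.sqrt_div' _ hN0.le] at hgrowth
  rw [div_mul_eq_mul_div, div_mul_eq_mul_div, le_div_iff₀ hl]
  calc Real.log x ^ κ * Real.log 2 ^ κ
      ≤ Real.log (2 * N) ^ κ * Real.log (2 * (x / N)) ^ κ := hprod
    _ ≤ Real.log (2 * N) ^ κ * ((2 * κ + 2) ^ κ * (√2 * (√x / √N))) := by
        gcongr
        exact Real.rpow_nonneg (Real.log_nonneg (by linarith)) κ
    _ = _ := by ring

lemma exists_sum_log_rpow_div_sq_le {κ : ℝ} (hκ : 0 ≤ κ) :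
    ∃ B : ℝ, 0 ≤ B ∧ ∀ N : ℝ, 1 ≤ N → ∀ s : Finset ℕ, (∀ n ∈ s, N ≤ n) →
      ∑ n ∈ s, Real.log n ^ κ / (n : ℝ) ^ 2 ≤ B * Real.log (2 * N) ^ κ / N := by
  set c := (2 * κ + 2) ^ κ * √2 / Real.log 2 ^ κ
  have hc : 0 ≤ c := by positivity
  refine ⟨4 * c, by positivity, fun N hN s hs => ?_⟩
  have hN0 : 0 < N := by linarith
  have hsN : 0 < √N := Real.sqrt_pos.mpr hN0
  have hL : 0 ≤ Real.log (2 * N) ^ κ := Real.rpow_nonneg (Real.log_nonneg (by linarith)) κ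
  calc ∑ n ∈ s, Real.log n ^ κ / (n : ℝ) ^ 2
      ≤ ∑ n ∈ s, c * Real.log (2 * N) ^ κ / √N * ((n : ℝ) * √n)⁻¹ := by
        refine sum_le_sum fun n hn => ?_
        have hn0 : 0 < (n : ℝ) := hN0.trans_le (hs n hn)
        have hsn : (n : ℝ) = √(n : ℝ) ^ 2 := (Real.sq_sqrt hn0.le).symm
        calc Real.log n ^ κ / (n : ℝ) ^ 2
            ≤ c * Real.log (2 * N) ^ κ * (√n / √N) / (n : ℝ) ^ 2 := by
              gcongr
              exact log_rpow_le_of_le hκ hN (hs n hn)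
          _ = _ := by
              set t := √(n : ℝ)
              rw [hsn]
              field_simp
    _ = c * Real.log (2 * N) ^ κ / √N * ∑ n ∈ s, ((n : ℝ) * √n)⁻¹ := (mul_sum ..).symm
    _ ≤ c * Real.log (2 * N) ^ κ / √N * (4 / √N) := by
        gcongr
        exact sum_inv_mul_sqrt_le hN hs
    _ = 4 * c * Real.log (2 * N) ^ κ / N := by
        field_simp
        rw [Real.sq_sqrt hN0.le]
        ring

lemma card_Icc_ceil_floor_le {a b : ℝ} (ha : 0 ≤ a) (hab : a ≤ b) :
    (#(Icc ⌈a⌉₊ ⌊b⌋₊) : ℝ) ≤ b - a + 1 := by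
  have hle : ⌈a⌉₊ ≤ ⌊b⌋₊ + 1 := (Nat.ceil_mono hab).trans (Nat.ceil_le_floor_add_one b)
  rw [Nat.card_Icc, Nat.cast_sub hle]
  push_cast
  linarith [Nat.floor_le (ha.trans hab), Nat.le_ceil a]

lemma card_le_of_forall_mem_le {s : Finset ℕ} {X : ℝ} (hX : 0 ≤ X)
    (hs : ∀ n ∈ s, 1 ≤ n ∧ (n : ℝ) ≤ X) : (#s : ℝ) ≤ X := by
  have hsub : s ⊆ Icc 1 ⌊X⌋₊ := fun n hn =>
    mem_Icc.mpr ⟨(hs n hn).1, Nat.le_floor (hs n hn).2⟩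
  calc (#s : ℝ) ≤ ⌊X⌋₊ := by simpa using card_le_card hsub
    _ ≤ X := Nat.floor_le hX

lemma log_rpow_div_one_add_le {κ τ x X : ℝ} (hκ : 0 ≤ κ) (hx : 1 ≤ x) (hxX : x ≤ X) :
    Real.log x ^ κ / (1 + τ ^ 2 * x ^ 2) ≤ Real.log X ^ κ := by
  have hlog : 0 ≤ Real.log x := Real.log_nonneg hx
  calc Real.log x ^ κ / (1 + τ ^ 2 * x ^ 2) ≤ Real.log x ^ κ :=
        div_le_self (Real.rpow_nonneg hlog κ) (by nlinarith [sq_nonneg (τ * x)])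
    _ ≤ Real.log X ^ κ := by gcongr

lemma div_one_add_sq_mul_sq_le {y τ x : ℝ} (hy : 0 ≤ y) (hτ : τ ≠ 0) (hx : x ≠ 0) :
    y / (1 + τ ^ 2 * x ^ 2) ≤ (τ ^ 2)⁻¹ * (y / x ^ 2) := by
  rw [← div_eq_inv_mul, div_div, mul_comm (x ^ 2)]
  exact div_le_div_of_nonneg_left hy (by positivity) (by linarith)

lemma sum_log_rpow_div_one_add_le_card_mul {κ τ X : ℝ} (hκ : 0 ≤ κ) {s : Finset ℕ}
    (hs : ∀ n ∈ s, 1 ≤ (n : ℝ) ∧ (n : ℝ) ≤ X) :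
    ∑ n ∈ s, Real.log n ^ κ / (1 + τ ^ 2 * (n : ℝ) ^ 2) ≤ #s * Real.log X ^ κ := by
  simpa using sum_le_card_nsmul s _ _
    fun n hn => log_rpow_div_one_add_le (τ := τ) hκ (hs n hn).1 (hs n hn).2

lemma sum_log_rpow_div_one_add_le_inv_sq_mul {κ τ : ℝ} (hτ : τ ≠ 0) {s : Finset ℕ}
    (hs : ∀ n ∈ s, 1 ≤ (n : ℝ)) :
    ∑ n ∈ s, Real.log n ^ κ / (1 + τ ^ 2 * (n : ℝ) ^ 2) ≤
      (τ ^ 2)⁻¹ * ∑ n ∈ s, Real.log n ^ κ / (n : ℝ) ^ 2 := by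
  rw [mul_sum]
  exact sum_le_sum fun n hn => div_one_add_sq_mul_sq_le
    (Real.rpow_nonneg (Real.log_nonneg (hs n hn)) κ) hτ (by linarith [hs n hn])

lemma sum_log_rpow_div_one_add_le_of_le_inv {κ τ : ℝ} (hκ : 0 ≤ κ) (hτ : 0 < τ) (hτ1 : τ ≤ 1)
    {s : Finset ℕ} (hs : ∀ n ∈ s, 1 ≤ n ∧ (n : ℝ) ≤ 1 / τ) :
    ∑ n ∈ s, Real.log n ^ κ / (1 + τ ^ 2 * (n : ℝ) ^ 2) ≤ τ⁻¹ * Real.log (2 / τ) ^ κ := by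
  have h2τ : 1 / τ ≤ 2 / τ := by gcongr; norm_num
  have hL : 0 ≤ Real.log (2 / τ) ^ κ :=
    Real.rpow_nonneg (Real.log_nonneg (by rw [le_div_iff₀ hτ]; linarith)) κ
  calc _ ≤ #s * Real.log (2 / τ) ^ κ := sum_log_rpow_div_one_add_le_card_mul hκ
        fun n hn => ⟨Nat.one_le_cast.mpr (hs n hn).1, (hs n hn).2.trans h2τ⟩
    _ ≤ τ⁻¹ * Real.log (2 / τ) ^ κ := by
        gcongr
        rw [← one_div]
        exact card_le_of_forall_mem_le (by positivity) hs

lemma sum_Icc_ceil_floor_log_rpow_div_one_add_le {κ τ a b : ℝ} (hκ : 0 ≤ κ) (ha : 1 ≤ a)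
    (hab : a ≤ b) :
    ∑ n ∈ Icc ⌈a⌉₊ ⌊b⌋₊, Real.log n ^ κ / (1 + τ ^ 2 * (n : ℝ) ^ 2) ≤
      (b - a + 1) * Real.log b ^ κ := by
  have hL : 0 ≤ Real.log b ^ κ := Real.rpow_nonneg (Real.log_nonneg (ha.trans hab)) κ
  calc _ ≤ #(Icc ⌈a⌉₊ ⌊b⌋₊) * Real.log b ^ κ :=
        sum_log_rpow_div_one_add_le_card_mul hκ fun n hn =>
          ⟨ha.trans (Nat.ceil_le.mp (mem_Icc.mp hn).1),
            (Nat.le_floor_iff (by linarith)).mp (mem_Icc.mp hn).2⟩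
    _ ≤ (b - a + 1) * Real.log b ^ κ := by
        gcongr
        exact card_Icc_ceil_floor_le (by linarith) hab

lemma exists_sum_log_rpow_div_one_add_le {κ : ℝ} (hκ : 0 ≤ κ) :
    ∃ B : ℝ, 0 ≤ B ∧ ∀ τ : ℝ, τ ≠ 0 → ∀ N : ℝ, 1 ≤ N → ∀ s : Finset ℕ, (∀ n ∈ s, N ≤ n) →
      ∑ n ∈ s, Real.log n ^ κ / (1 + τ ^ 2 * (n : ℝ) ^ 2) ≤
        B / (τ ^ 2 * N) * Real.log (2 * N) ^ κ := by
  obtain ⟨B, hB, htail⟩ := exists_sum_log_rpow_div_sq_le hκ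
  refine ⟨B, hB, fun τ hτ N hN s hs => ?_⟩
  calc _ ≤ (τ ^ 2)⁻¹ * ∑ n ∈ s, Real.log n ^ κ / (n : ℝ) ^ 2 :=
        sum_log_rpow_div_one_add_le_inv_sq_mul hτ fun n hn => hN.trans (hs n hn)
    _ ≤ (τ ^ 2)⁻¹ * (B * Real.log (2 * N) ^ κ / N) := by
        gcongr
        exact htail N hN s hs
    _ = B / (τ ^ 2 * N) * Real.log (2 * N) ^ κ := by
        field_simp

/-- Lemma 2. -/
theorem lemma_two (κ : ℝ) (hκ : 0 ≤ κ) :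
    ∃ C : ℝ, 0 < C ∧ ∀ a b : ℝ, 1 ≤ a → a ≤ b → ∀ τ : ℝ, 0 < τ → τ ≤ 1 →
      (b ≤ 1 / τ →
        (∑ n ∈ Finset.Icc ⌈a⌉₊ ⌊b⌋₊, (Real.log n) ^ κ / (1 + τ ^ 2 * (n : ℝ) ^ 2)) ≤
          C * (b - a + 1) * (Real.log b) ^ κ) ∧
      (a ≤ 1 / τ → 1 / τ ≤ b →
        (∑ n ∈ Finset.Icc ⌈a⌉₊ ⌊b⌋₊, (Real.log n) ^ κ / (1 + τ ^ 2 * (n : ℝ) ^ 2)) ≤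
          C * τ⁻¹ * (Real.log (2 / τ)) ^ κ) ∧
      (1 / τ ≤ a →
        (∑ n ∈ Finset.Icc ⌈a⌉₊ ⌊b⌋₊, (Real.log n) ^ κ / (1 + τ ^ 2 * (n : ℝ) ^ 2)) ≤
          C / (τ ^ 2 * a) * (Real.log (2 * a)) ^ κ) := by
  obtain ⟨B, hB, htail⟩ := exists_sum_log_rpow_div_one_add_le hκ
  refine ⟨B + 1, by positivity, fun a b ha hab τ hτ hτ1 =>
    ⟨fun _ => ?_, fun _ _ => ?_, fun _ => ?_⟩⟩
  · have hL : 0 ≤ Real.log b ^ κ := Real.rpow_nonneg (Real.log_nonneg (ha.trans hab)) κ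
    calc _ ≤ (b - a + 1) * Real.log b ^ κ :=
          sum_Icc_ceil_floor_log_rpow_div_one_add_le hκ ha hab
      _ ≤ (B + 1) * (b - a + 1) * Real.log b ^ κ := by
          rw [mul_assoc]
          exact le_mul_of_one_le_left (mul_nonneg (by linarith) hL) (by linarith)
  · calc _ ≤ τ⁻¹ * Real.log (2 / τ) ^ κ + B / (τ ^ 2 * (1 / τ)) * Real.log (2 * (1 / τ)) ^ κ := by
          rw [← sum_filter_add_sum_filter_not _ fun n : ℕ => (n : ℝ) ≤ 1 / τ]
          refine add_le_add (sum_log_rpow_div_one_add_le_of_le_inv hκ hτ hτ1 fun n hn => ?_)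
            (htail τ hτ.ne' (1 / τ) (by rw [le_div_iff₀ hτ]; linarith) _ fun n hn =>
              (not_le.mp (mem_filter.mp hn).2).le)
          rw [mem_filter, mem_Icc] at hn
          exact ⟨(Nat.one_le_ceil_iff.mpr (by linarith)).trans hn.1.1, hn.2⟩
      _ = (B + 1) * τ⁻¹ * Real.log (2 / τ) ^ κ := by
          rw [mul_one_div]
          field_simp
          ring
  · have hL := Real.rpow_nonneg (Real.log_nonneg (show 1 ≤ 2 * a by linarith)) κ
    calc _ ≤ B / (τ ^ 2 * a) * Real.log (2 * a) ^ κ :=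
          htail τ hτ.ne' a ha _ fun n hn => Nat.ceil_le.mp (mem_Icc.mp hn).1
      _ ≤ (B + 1) / (τ ^ 2 * a) * Real.log (2 * a) ^ κ := by
          gcongr
          linarith

end
end
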